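/- Let A, B ∈ SU(2,1) with eigenvectors P_A, P_B, P_C as above and eigenvalues λ_A, λ_B, λ_{AB}. Writing (AB)⁻¹'s eigenvalue as λ_C, so λ_{AB} = 1/λ_C (in SU(2,1), conjugate of λ_C since |λ_C|=1): the cross-ratio X(P_A, P_B, P_C, A⁻¹P_C) equals 1 if and only if λ_A·λ_B·λ_C = 1. -/

import Mathlib

/-
The eigenvector relations and the invariance of the form give
`⟨P_BA, P_A⟩ = λ̄_A ⟨P_C, P_A⟩` (apply `A`) and `⟨P_C, P_B⟩ = λ_C⁻¹ λ̄_B ⟨P_BA, P_B⟩`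
(apply `B`, using `B P_C = λ_C⁻¹ P_BA`). Hence the cross-ratio is `λ_C / (λ̄_A λ̄_B)`, which is
`λ_A λ_B λ_C` since the eigenvalues are unimodular.
-/

open Complex Matrix

/-- The signature (2,1) Hermitian form on ℂ³. -/
def herm (z w : Fin 3 → ℂ) : ℂ :=
  z 0 * star (w 0) + z 1 * star (w 1) - z 2 * star (w 2)

/-- The matrix of the Hermitian form: J = diag(1,1,−1). -/
def Jmat : Matrix (Fin 3) (Fin 3) ℂ := !![1, 0, 0; 0, 1, 0; 0, 0, -1]

open scoped ComplexConjugate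

namespace Matrix

variable {n R : Type*} [Fintype n] [CommRing R] [StarRing R]

theorem star_mulVec_dotProduct_mulVec_of_preserves {A J : Matrix n n R}
    (hA : Aᴴ * J * A = J) (x y : n → R) :
    star (A *ᵥ y) ⬝ᵥ (J *ᵥ (A *ᵥ x)) = star y ⬝ᵥ (J *ᵥ x) := by
  rw [star_mulVec, ← dotProduct_mulVec, mulVec_mulVec, mulVec_mulVec, hA]

theorem mulVec_injective_of_preserves [DecidableEq n] {A J : Matrix n n R}
    (hJ : J * J = 1) (hA : Aᴴ * J * A = J) : Function.Injective A.mulVec := by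
  have hinv : (J * Aᴴ * J) * A = 1 := by
    rw [Matrix.mul_assoc, Matrix.mul_assoc, ← Matrix.mul_assoc Aᴴ, hA, hJ]
  intro x y hxy
  simpa [mulVec_mulVec, hinv] using congrArg (J * Aᴴ * J).mulVec hxy

end Matrix

theorem Jmat_mul_self : Jmat * Jmat = 1 := by
  ext i j; fin_cases i <;> fin_cases j <;> simp [Jmat, Matrix.mul_apply, Fin.sum_univ_three]

theorem herm_eq_star_dotProduct (z w : Fin 3 → ℂ) : herm z w = star w ⬝ᵥ (Jmat *ᵥ z) := by
  simp only [herm, RCLike.star_def, dotProduct, Pi.star_apply, mulVec, Jmat, of_apply, cons_val',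
    cons_val_fin_one, Fin.sum_univ_three, cons_val_zero, cons_val_one, cons_val, one_mul, zero_mul,
    add_zero, zero_add, neg_mul, mul_neg]
  ring

theorem herm_mulVec_mulVec {A : Matrix (Fin 3) (Fin 3) ℂ} (hA : Aᴴ * Jmat * A = Jmat)
    (z w : Fin 3 → ℂ) : herm (A *ᵥ z) (A *ᵥ w) = herm z w := by
  simp only [herm_eq_star_dotProduct, star_mulVec_dotProduct_mulVec_of_preserves hA]

theorem herm_smul_left (c : ℂ) (z w : Fin 3 → ℂ) : herm (c • z) w = c * herm z w := by
  simp only [herm, Pi.smul_apply, smul_eq_mul]; ring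

theorem herm_smul_right (c : ℂ) (z w : Fin 3 → ℂ) : herm z (c • w) = conj c * herm z w := by
  simp only [herm, Pi.smul_apply, smul_eq_mul, star_mul', RCLike.star_def]; ring

theorem stmt13_general (A B : Matrix (Fin 3) (Fin 3) ℂ)
    (hA : Aᴴ * Jmat * A = Jmat)
    (hB : Bᴴ * Jmat * B = Jmat)
    (PA PB PC PBA : Fin 3 → ℂ) (lA lB lC : ℂ)
    (hlA : ‖lA‖ = 1) (hlB : ‖lB‖ = 1)
    (hPA : A.mulVec PA = lA • PA) (hPB : B.mulVec PB = lB • PB)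
    (hPC : (A * B).mulVec PC = lC⁻¹ • PC)
    (hPBA : A.mulVec PBA = PC)
    (h2 : herm PC PB ≠ 0)
    (h3 : herm PBA PA ≠ 0) :
    (herm PC PA * herm PBA PB) / (herm PC PB * herm PBA PA) = 1 ↔ lA * lB * lC = 1 := by
  have hBPC : B *ᵥ PC = lC⁻¹ • PBA := mulVec_injective_of_preserves Jmat_mul_self hA <| by
    rw [mulVec_mulVec, hPC, mulVec_smul, hPBA]
  have hAform : herm PBA PA = lA⁻¹ * herm PC PA := by
    rw [← herm_mulVec_mulVec hA, hPBA, hPA, herm_smul_right, inv_eq_conj hlA]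
  have hBform : herm PC PB = lC⁻¹ * lB⁻¹ * herm PBA PB := by
    rw [← herm_mulVec_mulVec hB, hBPC, hPB, herm_smul_left, herm_smul_right, inv_eq_conj hlB,
      mul_assoc]
  have hlA0 : lA ≠ 0 := by rintro rfl; simp at hlA
  have hlB0 : lB ≠ 0 := by rintro rfl; simp at hlB
  have hlC0 : lC ≠ 0 := by rintro rfl; simp [hBform] at h2
  have hCA : herm PC PA ≠ 0 := right_ne_zero_of_mul (hAform ▸ h3)
  have hBAB : herm PBA PB ≠ 0 := right_ne_zero_of_mul (hBform ▸ h2)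
  have hratio : herm PC PA * herm PBA PB / (herm PC PB * herm PBA PA) = lA * lB * lC := by
    rw [hAform, hBform]
    field_simp
  rw [hratio]

theorem stmt13 (A B : Matrix (Fin 3) (Fin 3) ℂ)
    (hA : Aᴴ * Jmat * A = Jmat) (hdA : A.det = 1)
    (hB : Bᴴ * Jmat * B = Jmat) (hdB : B.det = 1)
    (PA PB PC PBA : Fin 3 → ℂ) (lA lB lC : ℂ)
    (hlA : ‖lA‖ = 1) (hlB : ‖lB‖ = 1) (hlC : ‖lC‖ = 1)
    (hPA : A.mulVec PA = lA • PA) (hPB : B.mulVec PB = lB • PB)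
    (hPC : (A * B).mulVec PC = lC⁻¹ • PC)
    (hPBA : A.mulVec PBA = PC)
    (h1 : herm PC PA ≠ 0) (h2 : herm PC PB ≠ 0)
    (h3 : herm PBA PA ≠ 0) (h4 : herm PBA PB ≠ 0)
    (h5 : herm PA PB ≠ 0) :
    (herm PC PA * herm PBA PB) / (herm PC PB * herm PBA PA) = 1 ↔ lA * lB * lC = 1 :=
  stmt13_general A B hA hB PA PB PC PBA lA lB lC hlA hlB hPA hPB hPC hPBA h2 h3
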